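/- Assume additionally that L is convex with unique global minimizer y := F(x̄) + ε (Argmin L = {y}), that L(y(0)) > 0, and let Ψ : (0, r₀) → ℝ be differentiable with Ψ'(s) = −ψ'(s)² on (0, r₀). Then for every s̄ ∈ (0, L(y(0))] with ψ(s̄) ≤ ‖ε‖ and every t ≥ 4·(Ψ(s̄) − Ψ(L(y(0))))/(σ_F²·σ₀²), one has the early-stopping bound ‖y(t) − F(x̄)‖ ≤ 2‖ε‖. -/

import Mathlib

/-!
Along the flow the loss `ℓ s = L (F (g (θ s)))` decreases with `ℓ' = -‖∇f (θ s)‖²`, where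
`f = L ∘ F ∘ g`. On the ball `B̄(θ₀, R)` the Lipschitz bound on `J_g` keeps
`σ_min (J_g θ) ≥ σ₀ / 2`, so restricted injectivity transfers the KL inequality of `L` to `f` with
constant `c = σ_F σ₀ / 2`: `ψ' (ℓ s) * ‖∇f (θ s)‖ ≥ c`. Hence the trajectory has length at most
`ψ (ℓ 0) / c = R' < R`, so it never leaves the ball, and `Ψ (ℓ s) - c² s` is nondecreasing, so at
the stated time `Ψ (ℓ t) ≥ Ψ s̄`, which forces `ℓ t ≤ s̄` because `Ψ` decreases strictly at `ℓ t`.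

The KL inequality alone yields the error bound `‖v - y‖ ≤ ψ (L v)`: minimise
`ψ (L w) + α ‖w - v‖` for `α < 1`; at a minimiser with `L > 0` the gradient of `ψ ∘ L` would have
norm at most `α < 1`, against KL, so the minimiser is `y`. Hence
`‖y(t) - F x̄‖ ≤ ψ s̄ + ‖ε‖ ≤ 2 ‖ε‖`.
-/

open Set Metric InnerProductSpace ContinuousLinearMap
open scoped Topology NNReal

noncomputable def sigmaMin {E F : Type*} [NormedAddCommGroup E] [InnerProductSpace ℝ E]
    [CompleteSpace E] [NormedAddCommGroup F] [InnerProductSpace ℝ F] [CompleteSpace F]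
    (A : E →L[ℝ] F) : ℝ :=
  ⨅ w : {w : F // ‖w‖ = 1}, ‖ContinuousLinearMap.adjoint A w.1‖

section Adjoint

variable {E F : Type*} [NormedAddCommGroup E] [InnerProductSpace ℝ E] [CompleteSpace E]
  [NormedAddCommGroup F] [InnerProductSpace ℝ F] [CompleteSpace F]

theorem sigmaMin_nonneg (A : E →L[ℝ] F) : 0 ≤ sigmaMin A :=
  Real.iInf_nonneg fun _ => norm_nonneg _

theorem sigmaMin_mul_norm_le (A : E →L[ℝ] F) (u : F) : sigmaMin A * ‖u‖ ≤ ‖adjoint A u‖ := by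
  rcases eq_or_ne u 0 with rfl | hu
  · simp
  have hu' : 0 < ‖u‖ := norm_pos_iff.2 hu
  have hle : sigmaMin A ≤ ‖adjoint A (‖u‖⁻¹ • u)‖ :=
    ciInf_le ⟨0, by rintro _ ⟨w, rfl⟩; positivity⟩ (⟨‖u‖⁻¹ • u, norm_smul_inv_norm hu⟩ :
      {w : F // ‖w‖ = 1})
  rw [map_smul, norm_smul, norm_inv, norm_norm, inv_mul_eq_div, le_div_iff₀ hu'] at hle
  exact hle

theorem sigmaMin_sub_norm_sub_mul_norm_le (A B : E →L[ℝ] F) (u : F) :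
    (sigmaMin A - ‖A - B‖) * ‖u‖ ≤ ‖adjoint B u‖ := by
  have hAB : ‖adjoint (A - B) u‖ ≤ ‖A - B‖ * ‖u‖ := by
    simpa only [LinearIsometryEquiv.norm_map] using (adjoint (A - B)).le_opNorm u
  have htri : ‖adjoint A u‖ ≤ ‖adjoint (A - B) u‖ + ‖adjoint B u‖ := by
    simpa only [map_sub, sub_apply, sub_add_cancel] using
      norm_add_le (adjoint (A - B) u) (adjoint B u)
  linarith [sigmaMin_mul_norm_le A u]

theorem HasGradientAt.comp_hasFDerivAt {φ : F → ℝ} {G : E → F} {G' : E →L[ℝ] F} {v : F} {q : E}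
    (hφ : HasGradientAt φ v (G q)) (hG : HasFDerivAt G G' q) :
    HasGradientAt (fun x => φ (G x)) (adjoint G' v) q := by
  rw [hasGradientAt_iff_hasFDerivAt] at hφ ⊢
  refine (hφ.comp q hG).congr_fderiv ?_
  ext w
  simp [adjoint_inner_left]

end Adjoint

section Composite

variable {E G H : Type*} [NormedAddCommGroup E] [InnerProductSpace ℝ E] [CompleteSpace E]
  [NormedAddCommGroup G] [InnerProductSpace ℝ G] [CompleteSpace G]
  [NormedAddCommGroup H] [InnerProductSpace ℝ H] [CompleteSpace H]

theorem gradient_comp_comp {L : H → ℝ} {F : G → H} {g : E → G} {q : E}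
    (hL : DifferentiableAt ℝ L (F (g q))) (hF : DifferentiableAt ℝ F (g q))
    (hg : DifferentiableAt ℝ g q) :
    gradient (fun x => L (F (g x))) q =
      adjoint (fderiv ℝ g q) (adjoint (fderiv ℝ F (g q)) (gradient L (F (g q)))) := by
  have h := hL.hasGradientAt.comp_hasFDerivAt (G := fun x => F (g x))
    (hF.hasFDerivAt.comp q hg.hasFDerivAt)
  rw [h.gradient, adjoint_comp]
  rfl

theorem mul_mul_norm_gradient_le_norm_gradient_comp_comp {L : H → ℝ} {F : G → H} {g : E → G}
    {q : E} {a b : ℝ} (hL : DifferentiableAt ℝ L (F (g q))) (hF : DifferentiableAt ℝ F (g q))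
    (hg : DifferentiableAt ℝ g q) (ha : 0 ≤ a)
    (hF_inj : b * ‖gradient L (F (g q))‖ ≤ ‖adjoint (fderiv ℝ F (g q)) (gradient L (F (g q)))‖)
    (hg_inj : ∀ u, a * ‖u‖ ≤ ‖adjoint (fderiv ℝ g q) u‖) :
    a * b * ‖gradient L (F (g q))‖ ≤ ‖gradient (fun x => L (F (g x))) q‖ := by
  rw [gradient_comp_comp hL hF hg, mul_assoc]
  exact (mul_le_mul_of_nonneg_left hF_inj ha).trans (hg_inj _)

theorem le_mul_norm_gradient_comp_comp_of_KL {L : H → ℝ} {F : G → H} {g : E → G}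
    {ψ' : ℝ → ℝ} {q₀ q : E} {R σF : ℝ} (hL : DifferentiableAt ℝ L (F (g q)))
    (hF : DifferentiableAt ℝ F (g q)) (hg : DifferentiableAt ℝ g q) (hσF : 0 ≤ σF) (hR : 0 < R)
    (hq : q ∈ closedBall q₀ R)
    (hF_inj : σF * ‖gradient L (F (g q))‖ ≤ ‖adjoint (fderiv ℝ F (g q)) (gradient L (F (g q)))‖)
    (hg_lip : ‖fderiv ℝ g q₀ - fderiv ℝ g q‖ ≤ sigmaMin (fderiv ℝ g q₀) / (2 * R) * ‖q₀ - q‖)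
    (hKL : 1 ≤ ψ' (L (F (g q))) * ‖gradient L (F (g q))‖) :
    σF * sigmaMin (fderiv ℝ g q₀) / 2 ≤
      ψ' (L (F (g q))) * ‖gradient (fun x => L (F (g x))) q‖ := by
  set σ₀ := sigmaMin (fderiv ℝ g q₀)
  have hσ₀ : 0 ≤ σ₀ := sigmaMin_nonneg _
  have hnear : ‖fderiv ℝ g q₀ - fderiv ℝ g q‖ ≤ σ₀ / 2 :=
    calc _ ≤ σ₀ / (2 * R) * ‖q₀ - q‖ := hg_lip
      _ ≤ σ₀ / (2 * R) * R := by
        gcongr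
        rwa [← dist_eq_norm, dist_comm]
      _ = σ₀ / 2 := by field_simp
  have hg_inj : ∀ u, σ₀ / 2 * ‖u‖ ≤ ‖adjoint (fderiv ℝ g q) u‖ := fun u => by
    nlinarith [sigmaMin_sub_norm_sub_mul_norm_le (fderiv ℝ g q₀) (fderiv ℝ g q) u, norm_nonneg u]
  have hgrad :=
    mul_mul_norm_gradient_le_norm_gradient_comp_comp hL hF hg (by positivity) hF_inj hg_inj
  have hψ' : 0 ≤ ψ' (L (F (g q))) := by
    by_contra! h
    nlinarith [norm_nonneg (gradient L (F (g q)))]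
  calc σF * σ₀ / 2 = σ₀ / 2 * σF * 1 := by ring
    _ ≤ σ₀ / 2 * σF * (ψ' (L (F (g q))) * ‖gradient L (F (g q))‖) := by gcongr
    _ = ψ' (L (F (g q))) * (σ₀ / 2 * σF * ‖gradient L (F (g q))‖) := by ring
    _ ≤ ψ' (L (F (g q))) * ‖gradient (fun x => L (F (g x))) q‖ :=
      mul_le_mul_of_nonneg_left hgrad hψ'

end Composite

section PenalizedMinimum

theorem neg_le_of_hasDerivAt_of_forall_pos {k : ℝ → ℝ} {d C : ℝ} (hk : HasDerivAt k d 0)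
    (hle : ∀ s > 0, k 0 - C * s ≤ k s) : -C ≤ d := by
  refine ge_of_tendsto hk.tendsto_slope_zero_right ?_
  filter_upwards [self_mem_nhdsWithin] with s (hs : 0 < s)
  rw [zero_add, smul_eq_mul, le_inv_mul_iff₀ hs]
  linarith [hle s hs]

variable {E : Type*} [NormedAddCommGroup E]

theorem exists_forall_add_mul_norm_sub_le [ProperSpace E] {h : E → ℝ} (hh : Continuous h)
    (hh_nonneg : ∀ w, 0 ≤ h w) {α : ℝ} (hα : 0 < α) (x : E) :
    ∃ z, ∀ w, h z + α * ‖z - x‖ ≤ h w + α * ‖w - x‖ := by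
  refine (hh.add (continuous_const.mul (continuous_id.sub continuous_const).norm)).exists_forall_le'
    x ?_
  filter_upwards [(isCompact_closedBall x (h x / α)).compl_mem_cocompact] with w hw
  rw [mem_compl_iff, mem_closedBall, not_le, dist_eq_norm, div_lt_iff₀' hα] at hw
  show h x + α * ‖x - x‖ ≤ h w + α * ‖w - x‖
  rw [sub_self, norm_zero, mul_zero, add_zero]
  linarith [hh_nonneg w]

variable [NormedSpace ℝ E]

theorem norm_le_of_forall_le_add_mul_norm_sub {h : E → ℝ} {h' : StrongDual ℝ E} {z : E} {α : ℝ}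
    (hα : 0 ≤ α) (hd : HasFDerivAt h h' z) (hmin : ∀ w, h z ≤ h w + α * ‖w - z‖) :
    ‖h'‖ ≤ α := by
  have hlow : ∀ v, -(α * ‖v‖) ≤ h' v := by
    intro v
    have hray : HasDerivAt (fun s : ℝ => h (z + s • v)) (h' v) 0 := by
      have hline : HasDerivAt (fun s : ℝ => z + s • v) v 0 := by
        simpa using ((hasDerivAt_id (0 : ℝ)).smul_const v).const_add z
      exact hd.comp_hasDerivAt_of_eq 0 hline (by simp)
    refine neg_le_of_hasDerivAt_of_forall_pos hray fun s hs => ?_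
    have hzs := hmin (z + s • v)
    simp only [zero_smul, add_zero, add_sub_cancel_left, norm_smul,
      Real.norm_of_nonneg hs.le] at hzs ⊢
    linarith
  refine opNorm_le_bound _ hα fun v => abs_le.2 ⟨hlow v, ?_⟩
  simpa [norm_neg] using hlow (-v)

end PenalizedMinimum

section KLErrorBound

variable {E : Type*} [NormedAddCommGroup E] [InnerProductSpace ℝ E] [ProperSpace E]

theorem norm_sub_le_of_KL {L : E → ℝ} {ψ ψ' : ℝ → ℝ} {r₀ : ℝ} {x y : E}
    (hL : Differentiable ℝ L) (hL_nonneg : ∀ v, 0 ≤ L v) (hzero : ∀ v, L v = 0 ↔ v = y)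
    (hψ0 : ψ 0 = 0) (hψ_cont : ContinuousOn ψ (Ico 0 r₀)) (hψ_mono : StrictMonoOn ψ (Ico 0 r₀))
    (hψ : ∀ s ∈ Ioo 0 r₀, HasDerivAt ψ (ψ' s) s)
    (hKL : ∀ v, 0 < L v → L v < r₀ → 1 ≤ ψ' (L v) * ‖gradient L v‖)
    (hx : L x < r₀) : ‖x - y‖ ≤ ψ (L x) := by
  obtain ⟨s, hxs, hsr⟩ := exists_between hx
  have hs : 0 < s := (hL_nonneg x).trans_lt hxs
  -- truncating `L` at the level `s < r₀` makes `ψ ∘ L` globally defined and continuous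
  set h : E → ℝ := fun w => ψ (min (L w) s) with hh_def
  have hmem : ∀ w, min (L w) s ∈ Ico 0 r₀ := fun w =>
    ⟨le_min (hL_nonneg w) hs.le, (min_le_right _ _).trans_lt hsr⟩
  have hh_cont : Continuous h := hψ_cont.comp_continuous (hL.continuous.min continuous_const) hmem
  have hh_nonneg : ∀ w, 0 ≤ h w := fun w =>
    hψ0 ▸ hψ_mono.monotoneOn ⟨le_rfl, hs.trans hsr⟩ (hmem w) (hmem w).1
  have hhx : h x = ψ (L x) := by simp only [hh_def, min_eq_left hxs.le]
  have hhy : h y = 0 := by simp only [hh_def, (hzero y).2 rfl, min_eq_left hs.le, hψ0]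
  refine (le_iff_forall_one_lt_le_mul₀ (hhx ▸ hh_nonneg x)).2 fun β hβ => ?_
  have hα : 0 < β⁻¹ := inv_pos.2 (zero_lt_one.trans hβ)
  obtain ⟨z, hz⟩ := exists_forall_add_mul_norm_sub_le hh_cont hh_nonneg hα x
  have hLz : L z = 0 := by
    by_contra hne
    have hLz : 0 < L z := (hL_nonneg z).lt_of_ne' hne
    have hLzs : L z < s := by
      by_contra! hsz
      have hhz : h z = ψ s := by simp only [hh_def, min_eq_right hsz]
      have hψxs := hψ_mono ⟨hL_nonneg x, hx⟩ ⟨hs.le, hsr⟩ hxs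
      have hzx := hz x
      rw [sub_self, norm_zero, mul_zero, add_zero] at hzx
      nlinarith [norm_nonneg (z - x)]
    have heq : h =ᶠ[𝓝 z] fun w => ψ (L w) := by
      filter_upwards [(isOpen_lt hL.continuous continuous_const).mem_nhds hLzs] with w hw
      simp only [hh_def, min_eq_left hw.le]
    have hd : HasFDerivAt h (ψ' (L z) • fderiv ℝ L z) z :=
      ((hψ _ ⟨hLz, hLzs.trans hsr⟩).comp_hasFDerivAt z (hL z).hasFDerivAt).congr_of_eventuallyEq
        heq
    have hslope := norm_le_of_forall_le_add_mul_norm_sub hα.le hd fun w => by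
      nlinarith [hz w, norm_sub_le_norm_sub_add_norm_sub w z x]
    have hgrad : ‖gradient L z‖ = ‖fderiv ℝ L z‖ := (toDual ℝ E).symm.norm_map _
    rw [norm_smul, Real.norm_eq_abs, ← hgrad] at hslope
    nlinarith [hKL z hLz (hLzs.trans hsr), le_abs_self (ψ' (L z)), inv_lt_one_of_one_lt₀ hβ,
      norm_nonneg (gradient L z)]
  have hzx := hz x
  rw [(hzero z).1 hLz, hhy, sub_self, norm_zero, mul_zero, add_zero, zero_add, hhx,
    norm_sub_rev, inv_mul_le_iff₀ (zero_lt_one.trans hβ)] at hzx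
  linarith

end KLErrorBound

theorem forall_dist_le_of_forall_Ico_dist_le_imp {X : Type*} [PseudoMetricSpace X] {θ : ℝ → X}
    {x₀ : X} {a b R R' : ℝ} (hθ : ContinuousOn θ (Icc a b)) (hR : R' < R)
    (htrap : ∀ c ∈ Icc a b, (∀ s ∈ Ico a c, dist (θ s) x₀ ≤ R) → dist (θ c) x₀ ≤ R') :
    ∀ s ∈ Icc a b, dist (θ s) x₀ ≤ R' := by
  suffices hlt : ∀ s ∈ Icc a b, dist (θ s) x₀ < R from
    fun c hc => htrap c hc fun s hs => (hlt s ⟨hs.1, hs.2.le.trans hc.2⟩).le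
  by_contra! hexit
  -- the first exit time from the open ball
  have hclosed : IsClosed (Icc a b ∩ (fun s => dist (θ s) x₀) ⁻¹' Ici R) :=
    (continuous_dist.comp_continuousOn (hθ.prodMk continuousOn_const)).preimage_isClosed_of_isClosed
      isClosed_Icc isClosed_Ici
  obtain ⟨c, ⟨hc, hRc⟩, hfirst⟩ :=
    (isCompact_Icc.of_isClosed_subset hclosed inter_subset_left).exists_isLeast hexit
  have hbefore : ∀ s ∈ Ico a c, dist (θ s) x₀ ≤ R := fun s hs =>
    (not_le.1 fun hRs => hs.2.not_ge (hfirst ⟨⟨hs.1, hs.2.le.trans hc.2⟩, hRs⟩)).le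
  linarith [htrap c hc hbefore, show R ≤ dist (θ c) x₀ from hRc]

theorem AntitoneOn.lt_of_hasDerivAt_ne_zero {Ψ : ℝ → ℝ} {a b d : ℝ}
    (hΨ : AntitoneOn Ψ (Icc a b)) (hab : a < b) (hd : HasDerivAt Ψ d b) (hd0 : d ≠ 0) :
    Ψ b < Ψ a := by
  by_contra! hconst
  obtain ⟨z, hne, hz⟩ := ((hd.eventually_ne hd0).filter_mono (nhdsLT_le_nhdsNE b)).and
    (Ioo_mem_nhdsLT hab) |>.exists
  exact hne (le_antisymm ((hΨ ⟨le_rfl, hab.le⟩ ⟨hz.1.le, hz.2.le⟩ hz.1.le).trans hconst)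
    (hΨ ⟨hz.1.le, hz.2.le⟩ ⟨hab.le, le_rfl⟩ hz.2.le))

theorem apply_eq_zero_iff_of_setOf_forall_le_eq_singleton {X : Type*} {L : X → ℝ} {y : X}
    (hL_nonneg : ∀ v, 0 ≤ L v) (hL_zero : ∃ v, L v = 0)
    (hargmin : {v | ∀ w, L v ≤ L w} = {y}) (v : X) : L v = 0 ↔ v = y := by
  have hmin : ∀ v, L v = 0 → v = y := fun v hv =>
    hargmin.subset (show v ∈ {v | ∀ w, L v ≤ L w} from fun w => hv ▸ hL_nonneg w)
  obtain ⟨v₀, hv₀⟩ := hL_zero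
  exact ⟨hmin v, fun hvy => hvy ▸ hmin v₀ hv₀ ▸ hv₀⟩

section GradientFlow

variable {E : Type*} [NormedAddCommGroup E] [InnerProductSpace ℝ E] [CompleteSpace E]
  {f : E → ℝ} {θ : ℝ → E}

theorem hasDerivAt_comp_of_hasDerivAt_neg_gradient {t : ℝ} (hf : DifferentiableAt ℝ f (θ t))
    (hθ : HasDerivAt θ (-gradient f (θ t)) t) :
    HasDerivAt (fun s => f (θ s)) (-‖gradient f (θ t)‖ ^ 2) t := by
  have := hf.hasFDerivAt.comp_hasDerivAt t hθ
  rwa [map_neg, ← inner_gradient_left, real_inner_self_eq_norm_sq] at this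

theorem mul_norm_sub_le_of_gradient_flow {ψ ψ' : ℝ → ℝ} {a b c : ℝ} (hab : a ≤ b) (hc : 0 < c)
    (hf : ∀ s ∈ Icc a b, DifferentiableAt ℝ f (θ s))
    (hθ : ∀ s ∈ Icc a b, HasDerivAt θ (-gradient f (θ s)) s)
    (hψ : ∀ s ∈ Icc a b, HasDerivAt ψ (ψ' (f (θ s))) (f (θ s)))
    (hKL : ∀ s ∈ Ico a b, c ≤ ψ' (f (θ s)) * ‖gradient f (θ s)‖) :
    c * ‖θ b - θ a‖ ≤ ψ (f (θ a)) - ψ (f (θ b)) := by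
  have hB : ∀ s ∈ Icc a b, HasDerivAt (fun s => (ψ (f (θ a)) - ψ (f (θ s))) / c)
      (ψ' (f (θ s)) * ‖gradient f (θ s)‖ ^ 2 / c) s := by
    intro s hs
    exact (((hψ s hs).comp s (hasDerivAt_comp_of_hasDerivAt_neg_gradient (hf s hs)
      (hθ s hs))).const_sub (ψ (f (θ a)))).div_const c |>.congr_deriv (by ring)
  have hlen := image_norm_le_of_norm_deriv_right_le_deriv_boundary' (f := fun s => θ s - θ a)
    (fun s hs => ((hθ s hs).continuousAt.sub continuousAt_const).continuousWithinAt)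
    (fun s hs => ((hθ s (Ico_subset_Icc_self hs)).sub_const (θ a)).hasDerivWithinAt)
    (by simp) (fun s hs => (hB s hs).continuousAt.continuousWithinAt)
    (fun s hs => (hB s (Ico_subset_Icc_self hs)).hasDerivWithinAt)
    (fun s hs => by
      rw [norm_neg, le_div_iff₀' hc]
      nlinarith [hKL s hs, norm_nonneg (gradient f (θ s))]) ⟨hab, le_rfl⟩
  rwa [le_div_iff₀' hc] at hlen

theorem sq_mul_sub_le_of_gradient_flow {ψ' Ψ : ℝ → ℝ} {a b c : ℝ} (hab : a ≤ b) (hc : 0 ≤ c)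
    (hf : ∀ s ∈ Icc a b, DifferentiableAt ℝ f (θ s))
    (hθ : ∀ s ∈ Icc a b, HasDerivAt θ (-gradient f (θ s)) s)
    (hΨ : ∀ s ∈ Icc a b, HasDerivAt Ψ (-(ψ' (f (θ s))) ^ 2) (f (θ s)))
    (hKL : ∀ s ∈ Icc a b, c ≤ ψ' (f (θ s)) * ‖gradient f (θ s)‖) :
    c ^ 2 * (b - a) ≤ Ψ (f (θ b)) - Ψ (f (θ a)) := by
  have hd : ∀ s ∈ Icc a b, HasDerivAt (fun s => Ψ (f (θ s)) - c ^ 2 * s)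
      ((ψ' (f (θ s)) * ‖gradient f (θ s)‖) ^ 2 - c ^ 2) s := by
    intro s hs
    refine ((hΨ s hs).comp s (hasDerivAt_comp_of_hasDerivAt_neg_gradient (hf s hs)
      (hθ s hs))).sub ((hasDerivAt_id s).const_mul (c ^ 2)) |>.congr_deriv ?_
    rw [mul_one]
    ring
  have hmono : MonotoneOn (fun s => Ψ (f (θ s)) - c ^ 2 * s) (Icc a b) :=
    monotoneOn_of_hasDerivWithinAt_nonneg (convex_Icc a b)
      (fun s hs => (hd s hs).continuousAt.continuousWithinAt)
      (fun s hs => (hd s (interior_subset hs)).hasDerivWithinAt)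
      (fun s hs => sub_nonneg.2 (pow_le_pow_left₀ hc (hKL s (interior_subset hs)) 2))
  linarith [hmono ⟨le_rfl, hab⟩ ⟨hab, le_rfl⟩ hab]

theorem antitoneOn_comp_of_gradient_flow {a b : ℝ}
    (hf : ∀ s ∈ Icc a b, DifferentiableAt ℝ f (θ s))
    (hθ : ∀ s ∈ Icc a b, HasDerivAt θ (-gradient f (θ s)) s) :
    AntitoneOn (fun s => f (θ s)) (Icc a b) :=
  have hℓ := fun s hs => hasDerivAt_comp_of_hasDerivAt_neg_gradient (hf s hs) (hθ s hs)
  antitoneOn_of_hasDerivWithinAt_nonpos (convex_Icc a b)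
    (fun s hs => (hℓ s hs).continuousAt.continuousWithinAt)
    (fun s hs => (hℓ s (interior_subset hs)).hasDerivWithinAt)
    (fun _ _ => neg_nonpos.2 (sq_nonneg _))

theorem mem_closedBall_of_gradient_flow_of_KL {ψ ψ' : ℝ → ℝ} {a b r₀ c R : ℝ} (hc : 0 < c)
    (hf : ∀ s ∈ Icc a b, DifferentiableAt ℝ f (θ s))
    (hθ : ∀ s ∈ Icc a b, HasDerivAt θ (-gradient f (θ s)) s)
    (hrange : ∀ s ∈ Icc a b, f (θ s) ∈ Ioo 0 r₀)
    (hψ_nonneg : ∀ u ∈ Ioo 0 r₀, 0 ≤ ψ u) (hψ : ∀ u ∈ Ioo 0 r₀, HasDerivAt ψ (ψ' u) u)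
    (hKL : ∀ q ∈ closedBall (θ a) R, 0 < f q → f q < r₀ → c ≤ ψ' (f q) * ‖gradient f q‖)
    (hR : ψ (f (θ a)) < c * R) :
    ∀ s ∈ Icc a b, θ s ∈ closedBall (θ a) (ψ (f (θ a)) / c) := by
  refine forall_dist_le_of_forall_Ico_dist_le_imp
    (fun s hs => (hθ s hs).continuousAt.continuousWithinAt) ((div_lt_iff₀' hc).2 hR)
    fun b' hb' hin => ?_
  have hsub : Icc a b' ⊆ Icc a b := Icc_subset_Icc_right hb'.2
  have hlen := mul_norm_sub_le_of_gradient_flow hb'.1 hc (fun s hs => hf s (hsub hs))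
    (fun s hs => hθ s (hsub hs)) (fun s hs => hψ _ (hrange s (hsub hs))) fun s hs =>
      have hs' := hrange s (hsub (Ico_subset_Icc_self hs))
      hKL _ (mem_closedBall.2 (hin s hs)) hs'.1 hs'.2
  rw [dist_eq_norm, le_div_iff₀' hc]
  linarith [hψ_nonneg _ (hrange b' hb')]

theorem le_of_gradient_flow_of_KL {ψ ψ' Ψ : ℝ → ℝ} {r₀ c R t s : ℝ}
    (hf : Differentiable ℝ f) (ht : 0 ≤ t)
    (hθ : ∀ τ ∈ Icc 0 t, HasDerivAt θ (-gradient f (θ τ)) τ)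
    (hpos : 0 < f (θ t)) (hr₀ : f (θ 0) < r₀)
    (hψ0 : ψ 0 = 0) (hψ_mono : MonotoneOn ψ (Ico 0 r₀))
    (hψ : ∀ u ∈ Ioo 0 r₀, HasDerivAt ψ (ψ' u) u)
    (hΨ : ∀ u ∈ Ioo 0 r₀, HasDerivAt Ψ (-(ψ' u) ^ 2) u) (hc : 0 < c)
    (hKL : ∀ q ∈ closedBall (θ 0) R, 0 < f q → f q < r₀ → c ≤ ψ' (f q) * ‖gradient f q‖)
    (hR : ψ (f (θ 0)) < c * R) (hs : 0 < s) (hT : Ψ s - Ψ (f (θ 0)) ≤ c ^ 2 * t) :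
    f (θ t) ≤ s := by
  have hanti := antitoneOn_comp_of_gradient_flow (fun τ _ => hf (θ τ)) hθ
  have hrange : ∀ τ ∈ Icc 0 t, f (θ τ) ∈ Ioo 0 r₀ := fun τ hτ =>
    ⟨hpos.trans_le (hanti hτ ⟨ht, le_rfl⟩ hτ.2), (hanti ⟨le_rfl, ht⟩ hτ hτ.1).trans_lt hr₀⟩
  have hball := mem_closedBall_of_gradient_flow_of_KL hc (fun τ _ => hf (θ τ)) hθ hrange
    (fun u hu => hψ0 ▸ hψ_mono ⟨le_rfl, hu.1.trans hu.2⟩ (Ioo_subset_Ico_self hu) hu.1.le) hψ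
    hKL hR
  have hKLθ : ∀ τ ∈ Icc 0 t, c ≤ ψ' (f (θ τ)) * ‖gradient f (θ τ)‖ := fun τ hτ =>
    hKL _ (closedBall_subset_closedBall ((div_lt_iff₀' hc).2 hR).le (hball τ hτ))
      (hrange τ hτ).1 (hrange τ hτ).2
  have hrate := sq_mul_sub_le_of_gradient_flow ht hc.le (fun τ _ => hf _) hθ
    (fun τ hτ => hΨ _ (hrange τ hτ)) hKLθ
  by_contra! hlt
  have htr := hrange t ⟨ht, le_rfl⟩
  have hΨ_anti : AntitoneOn Ψ (Icc s (f (θ t))) :=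
    antitoneOn_of_hasDerivWithinAt_nonpos (convex_Icc _ _)
      (fun u hu => (hΨ u ⟨hs.trans_le hu.1, hu.2.trans_lt htr.2⟩).continuousAt.continuousWithinAt)
      (fun u hu => (hΨ u ⟨hs.trans_le (interior_subset hu).1,
        (interior_subset hu).2.trans_lt htr.2⟩).hasDerivWithinAt)
      (fun u _ => neg_nonpos.2 (sq_nonneg _))
  have hψ'_ne : ψ' (f (θ t)) ≠ 0 := by
    intro h0
    have hKLt := hKLθ t ⟨ht, le_rfl⟩
    rw [h0, zero_mul] at hKLt
    linarith
  linarith [hΨ_anti.lt_of_hasDerivAt_ne_zero hlt (hΨ _ htr) (by simpa using hψ'_ne)]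

end GradientFlow

theorem stmt7_general
    {n m p : ℕ}
    (L : EuclideanSpace ℝ (Fin m) → ℝ)
    (F : EuclideanSpace ℝ (Fin n) → EuclideanSpace ℝ (Fin m))
    (g : EuclideanSpace ℝ (Fin p) → EuclideanSpace ℝ (Fin n))
    (hL : ContDiff ℝ 1 L)
    (hLnonneg : ∀ v, 0 ≤ L v) (hLmin : ∃ v, L v = 0)
    (hF : ContDiff ℝ 1 F)
    (hg : ContDiff ℝ 1 g)
    (θ θ' : ℝ → EuclideanSpace ℝ (Fin p)) (θ₀ : EuclideanSpace ℝ (Fin p))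
    (hθ0 : θ 0 = θ₀)
    (hθd : ∀ t ≥ (0:ℝ), HasDerivAt θ (θ' t) t)
    (hflow : ∀ t ≥ (0:ℝ), θ' t = -gradient (fun q => L (F (g q))) (θ t))
    (r₀ : ℝ) (hr₀ : L (F (g (θ 0))) < r₀)
    (ψ ψ' : ℝ → ℝ) (hψ0 : ψ 0 = 0)
    (hψcont : ContinuousOn ψ (Set.Ico 0 r₀))
    (hψmono : StrictMonoOn ψ (Set.Ico 0 r₀))
    (hψd : ∀ s ∈ Set.Ioo (0:ℝ) r₀, HasDerivAt ψ (ψ' s) s)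
    (hKL : ∀ v : EuclideanSpace ℝ (Fin m), 0 < L v → L v < r₀ →
      1 ≤ ψ' (L v) * ‖gradient L v‖)
    (σF : ℝ) (hσF : 0 < σF)
    (σ₀ : ℝ) (hσ₀ : σ₀ = sigmaMin (fderiv ℝ g θ₀)) (hσ₀pos : 0 < σ₀)
    (R : ℝ) (hRpos : 0 < R)
    (hinj : ∀ q ∈ Metric.closedBall θ₀ R,
      gradient L (F (g q)) ∈ LinearMap.range (fderiv ℝ F (g q) : EuclideanSpace ℝ (Fin n) →ₗ[ℝ] EuclideanSpace ℝ (Fin m)) ∧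
      ∀ z ∈ LinearMap.range (fderiv ℝ F (g q) : EuclideanSpace ℝ (Fin n) →ₗ[ℝ] EuclideanSpace ℝ (Fin m)),
        σF * ‖z‖ ≤ ‖ContinuousLinearMap.adjoint (fderiv ℝ F (g q)) z‖)
    (hLip : ∀ a ∈ Metric.closedBall θ₀ R, ∀ b ∈ Metric.closedBall θ₀ R,
      ‖fderiv ℝ g a - fderiv ℝ g b‖ ≤ σ₀ / (2 * R) * ‖a - b‖)
    (R' : ℝ) (hRdef : R' = 2 / (σF * σ₀) * ψ (L (F (g θ₀)))) (hRR : R' < R)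
    (xbar : EuclideanSpace ℝ (Fin n)) (ε y : EuclideanSpace ℝ (Fin m))
    (hy : y = F xbar + ε)
    (hargmin : {v : EuclideanSpace ℝ (Fin m) | ∀ w, L v ≤ L w} = {y})
    (Ψ : ℝ → ℝ) (hΨ : ∀ s ∈ Set.Ioo (0:ℝ) r₀, HasDerivAt Ψ (-(ψ' s) ^ 2) s) :
    ∀ sbar ∈ Set.Ioc (0:ℝ) (L (F (g (θ 0)))), ψ sbar ≤ ‖ε‖ →
      ∀ t ≥ (0:ℝ), 4 * (Ψ sbar - Ψ (L (F (g (θ 0))))) / (σF ^ 2 * σ₀ ^ 2) ≤ t →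
        ‖F (g (θ t)) - F xbar‖ ≤ 2 * ‖ε‖ := by
  intro sbar hsbar hψsbar t ht hT
  have hdL := hL.differentiable one_ne_zero
  have hdF := hF.differentiable one_ne_zero
  have hdg := hg.differentiable one_ne_zero
  have hKLf : ∀ q ∈ closedBall (θ 0) R, 0 < L (F (g q)) → L (F (g q)) < r₀ →
      σF * σ₀ / 2 ≤ ψ' (L (F (g q))) * ‖gradient (fun q => L (F (g q))) q‖ := by
    rw [hθ0, hσ₀]
    intro q hq hq0 hqr
    exact le_mul_norm_gradient_comp_comp_of_KL (hdL _) (hdF _) (hdg q) hσF.le hRpos hq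
      ((hinj q hq).2 _ (hinj q hq).1) (hσ₀ ▸ hLip _ (mem_closedBall_self hRpos.le) q hq)
      (hKL _ hq0 hqr)
  have hR : ψ (L (F (g (θ 0)))) < σF * σ₀ / 2 * R := by
    rw [hθ0]
    calc ψ (L (F (g θ₀))) = σF * σ₀ / 2 * R' := by rw [hRdef]; field_simp
      _ < σF * σ₀ / 2 * R := by gcongr
  have hℓt : L (F (g (θ t))) ≤ sbar := by
    rcases (hLnonneg (F (g (θ t)))).eq_or_lt with h0 | hpos
    · linarith [hsbar.1]
    rw [div_le_iff₀ (by positivity)] at hT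
    exact le_of_gradient_flow_of_KL (f := fun q => L (F (g q))) (hdL.comp (hdF.comp hdg)) ht
      (fun τ hτ => hflow τ hτ.1 ▸ hθd τ hτ.1) hpos hr₀ hψ0 hψmono.monotoneOn hψd hΨ
      (by positivity) hKLf hR hsbar.1 (by nlinarith)
  have hℓt_lt : L (F (g (θ t))) < r₀ := hℓt.trans_lt (hsbar.2.trans_lt hr₀)
  have herr := norm_sub_le_of_KL hdL hLnonneg
    (apply_eq_zero_iff_of_setOf_forall_le_eq_singleton hLnonneg hLmin hargmin) hψ0 hψcont hψmono
    hψd hKL hℓt_lt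
  have hψt := hψmono.monotoneOn ⟨hLnonneg _, hℓt_lt⟩ ⟨hsbar.1.le, hsbar.2.trans_lt hr₀⟩ hℓt
  calc ‖F (g (θ t)) - F xbar‖ = ‖(F (g (θ t)) - y) + ε‖ := by rw [hy]; abel_nf
    _ ≤ ‖F (g (θ t)) - y‖ + ‖ε‖ := norm_add_le _ _
    _ ≤ 2 * ‖ε‖ := by linarith

theorem stmt7
    {n m p : ℕ} (hn : 0 < n) (hm : 0 < m) (hp : 0 < p)
    (L : EuclideanSpace ℝ (Fin m) → ℝ)
    (F : EuclideanSpace ℝ (Fin n) → EuclideanSpace ℝ (Fin m))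
    (g : EuclideanSpace ℝ (Fin p) → EuclideanSpace ℝ (Fin n))
    (hL : ContDiff ℝ 1 L)
    (hLnonneg : ∀ v, 0 ≤ L v) (hLmin : ∃ v, L v = 0)
    (hLgrad : ∀ s : Set (EuclideanSpace ℝ (Fin m)), Bornology.IsBounded s →
      ∃ K : ℝ≥0, LipschitzOnWith K (fun v => gradient L v) s)
    (hF : ContDiff ℝ 1 F)
    (hJF : ∀ s : Set (EuclideanSpace ℝ (Fin n)), Bornology.IsBounded s →
      ∃ K : ℝ≥0, LipschitzOnWith K (fun x => fderiv ℝ F x) s)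
    (hg : ContDiff ℝ 1 g)
    (hJg : ∀ s : Set (EuclideanSpace ℝ (Fin p)), Bornology.IsBounded s →
      ∃ K : ℝ≥0, LipschitzOnWith K (fun q => fderiv ℝ g q) s)
    (θ θ' : ℝ → EuclideanSpace ℝ (Fin p)) (θ₀ : EuclideanSpace ℝ (Fin p))
    (hθ0 : θ 0 = θ₀)
    (hθd : ∀ t ≥ (0:ℝ), HasDerivAt θ (θ' t) t)
    (hθcont : ContinuousOn θ' (Set.Ici 0))
    (hflow : ∀ t ≥ (0:ℝ), θ' t = -gradient (fun q => L (F (g q))) (θ t))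
    (r₀ : ℝ) (hr₀ : L (F (g (θ 0))) < r₀)
    (ψ ψ' : ℝ → ℝ) (hψ0 : ψ 0 = 0)
    (hψcont : ContinuousOn ψ (Set.Ico 0 r₀))
    (hψmono : StrictMonoOn ψ (Set.Ico 0 r₀))
    (hψd : ∀ s ∈ Set.Ioo (0:ℝ) r₀, HasDerivAt ψ (ψ' s) s)
    (hKL : ∀ v : EuclideanSpace ℝ (Fin m), 0 < L v → L v < r₀ →
      1 ≤ ψ' (L v) * ‖gradient L v‖)
    (σF : ℝ) (hσF : 0 < σF)
    (σ₀ : ℝ) (hσ₀ : σ₀ = sigmaMin (fderiv ℝ g θ₀)) (hσ₀pos : 0 < σ₀)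
    (R : ℝ) (hRpos : 0 < R)
    (hinj : ∀ q ∈ Metric.closedBall θ₀ R,
      gradient L (F (g q)) ∈ LinearMap.range (fderiv ℝ F (g q) : EuclideanSpace ℝ (Fin n) →ₗ[ℝ] EuclideanSpace ℝ (Fin m)) ∧
      ∀ z ∈ LinearMap.range (fderiv ℝ F (g q) : EuclideanSpace ℝ (Fin n) →ₗ[ℝ] EuclideanSpace ℝ (Fin m)),
        σF * ‖z‖ ≤ ‖ContinuousLinearMap.adjoint (fderiv ℝ F (g q)) z‖)
    (hLip : ∀ a ∈ Metric.closedBall θ₀ R, ∀ b ∈ Metric.closedBall θ₀ R,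
      ‖fderiv ℝ g a - fderiv ℝ g b‖ ≤ σ₀ / (2 * R) * ‖a - b‖)
    (R' : ℝ) (hRdef : R' = 2 / (σF * σ₀) * ψ (L (F (g θ₀)))) (hRR : R' < R)
    (xbar : EuclideanSpace ℝ (Fin n)) (ε y : EuclideanSpace ℝ (Fin m))
    (hy : y = F xbar + ε)
    (hconv : ConvexOn ℝ Set.univ L)
    (hargmin : {v : EuclideanSpace ℝ (Fin m) | ∀ w, L v ≤ L w} = {y})
    (hL0pos : 0 < L (F (g (θ 0))))
    (Ψ : ℝ → ℝ) (hΨ : ∀ s ∈ Set.Ioo (0:ℝ) r₀, HasDerivAt Ψ (-(ψ' s) ^ 2) s) :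
    ∀ sbar ∈ Set.Ioc (0:ℝ) (L (F (g (θ 0)))), ψ sbar ≤ ‖ε‖ →
      ∀ t ≥ (0:ℝ), 4 * (Ψ sbar - Ψ (L (F (g (θ 0))))) / (σF ^ 2 * σ₀ ^ 2) ≤ t →
        ‖F (g (θ t)) - F xbar‖ ≤ 2 * ‖ε‖ :=
  stmt7_general L F g hL hLnonneg hLmin hF hg θ θ' θ₀ hθ0 hθd hflow r₀ hr₀ ψ ψ' hψ0 hψcont hψmono
    hψd hKL σF hσF σ₀ hσ₀ hσ₀pos R hRpos hinj hLip R' hRdef hRR xbar ε y hy hargmin Ψ hΨ
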